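/- arXiv:2107.02109 — 3 statements merged into one kernel-verified Lean document; each statement's English description precedes it below -/
import Mathlib

section
/- Let ξ ∈ ℝⁿ \ {0} and let σ be a d-dimensional linear subspace of ℝⁿ with 0 < |Π_σ ξ|/|ξ| < δ/4, where Π_σ is the orthogonal projection onto σ. Then there exists a d-dimensional linear subspace τ of ℝⁿ with Π_τ ξ = 0 and such that the distance d(σ,τ) := sup_{v ∈ S^{n-1}} |Π_σ v − Π_τ v| is less than δ/3. -/
open Submodule

noncomputable def projE {n : ℕ} (σ : Submodule ℝ (EuclideanSpace ℝ (Fin n))) :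
    EuclideanSpace ℝ (Fin n) →L[ℝ] EuclideanSpace ℝ (Fin n) :=
  σ.subtypeL.comp (orthogonalProjection σ)

open scoped InnerProductSpace
set_option maxHeartbeats 1000000

lemma projE_apply {n : ℕ} (K : Submodule ℝ (EuclideanSpace ℝ (Fin n)))
    (x : EuclideanSpace ℝ (Fin n)) :
    projE K x = (orthogonalProjection K x : EuclideanSpace ℝ (Fin n)) := rfl

/-- Orthogonal projection onto `K ⊔ ℝ ∙ w` splits when `w` is a unit vector orthogonal
to `K`. -/
lemma projE_sup_singleton {n : ℕ} (K : Submodule ℝ (EuclideanSpace ℝ (Fin n)))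
    {w : EuclideanSpace ℝ (Fin n)} (hw : ‖w‖ = 1)
    (hwK : ∀ k ∈ K, ⟪k, w⟫_ℝ = 0) (x : EuclideanSpace ℝ (Fin n)) :
    projE (K ⊔ (ℝ ∙ w)) x = projE K x + ⟪w, x⟫_ℝ • w := by
  have hww : ⟪w, w⟫_ℝ = 1 := by
    rw [real_inner_self_eq_norm_sq, hw]; norm_num
  rw [projE_apply]
  refine (eq_starProjection_of_mem_of_inner_eq_zero (K := K ⊔ (ℝ ∙ w)) (u := x) ?_ ?_ :)
  · exact add_mem (mem_sup_left (coe_mem _))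
      (mem_sup_right (smul_mem _ _ (mem_span_singleton_self w)))
  · intro z hz
    obtain ⟨k, hk, l, hl, rfl⟩ := mem_sup.1 hz
    obtain ⟨c, rfl⟩ := mem_span_singleton.1 hl
    have h1 : ⟪x - projE K x, k⟫_ℝ = 0 := starProjection_inner_eq_zero x k hk
    have h1' : ⟪x, k⟫_ℝ = ⟪projE K x, k⟫_ℝ := by
      rwa [inner_sub_left, sub_eq_zero] at h1
    have h2 : ⟪projE K x, w⟫_ℝ = 0 := hwK _ (coe_mem _)
    have h3 : ⟪w, k⟫_ℝ = 0 := by rw [real_inner_comm]; exact hwK k hk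
    have h4 : ⟪x, w⟫_ℝ = ⟪w, x⟫_ℝ := real_inner_comm w x
    simp only [inner_add_right, inner_sub_left, inner_add_left, real_inner_smul_left,
      real_inner_smul_right]
    rw [h1', h2, h3, h4, hww]
    ring

/-- Key quantitative bound for the difference of two rank-one projections. -/
lemma key_bound {n : ℕ} {u w f : EuclideanSpace ℝ (Fin n)} {c s : ℝ}
    (hw : ⟪w, w⟫_ℝ = 1) (hf : ⟪f, f⟫_ℝ = 1) (hwf : ⟪w, f⟫_ℝ = 0)
    (hcs : c ^ 2 + s ^ 2 = 1) (hu : u = c • w + s • f) (x : EuclideanSpace ℝ (Fin n)) :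
    ‖⟪u, x⟫_ℝ • u - ⟪w, x⟫_ℝ • w‖ ≤ |s| * ‖x‖ := by
  have hfw : ⟪f, w⟫_ℝ = 0 := by rw [real_inner_comm]; exact hwf
  set b := ⟪w, x⟫_ℝ with hb
  set β := ⟪f, x⟫_ℝ with hβ
  have hbb : b ^ 2 + β ^ 2 ≤ ‖x‖ ^ 2 := by
    have h0 : (0:ℝ) ≤ ⟪x - b • w - β • f, x - b • w - β • f⟫_ℝ := real_inner_self_nonneg
    have hexp : ⟪x - b • w - β • f, x - b • w - β • f⟫_ℝ = ‖x‖ ^ 2 - b ^ 2 - β ^ 2 := by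
      simp only [inner_sub_left, inner_sub_right, real_inner_smul_left, real_inner_smul_right,
        hw, hf, hwf, hfw, real_inner_comm w x, real_inner_comm f x, ← hb, ← hβ]
      rw [real_inner_self_eq_norm_sq]
      ring
    rw [hexp] at h0; linarith
  have hval : ⟪u, x⟫_ℝ = c * b + s * β := by
    rw [hu, inner_add_left, real_inner_smul_left, real_inner_smul_left]
  have hTnorm : ‖⟪u, x⟫_ℝ • u - b • w‖ ^ 2 = s ^ 2 * (b ^ 2 + β ^ 2) := by
    rw [← real_inner_self_eq_norm_sq]
    simp only [hu, hval, inner_sub_left, inner_sub_right, inner_add_left, inner_add_right,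
      real_inner_smul_left, real_inner_smul_right, hw, hf, hwf, hfw, ← hb, ← hβ]
    linear_combination (2*c*b*s*β + c^2*b^2 - b^2 + s^2*β^2) * hcs
  nlinarith [norm_nonneg (⟪u, x⟫_ℝ • u - b • w), abs_nonneg s, norm_nonneg x, sq_abs s,
    mul_nonneg (abs_nonneg s) (norm_nonneg x)]

/-- Main construction lemma: given suitable `u`, `K`, `w`, build `τ`. -/
lemma tau_spec {n d : ℕ} {δ : ℝ} (σ K : Submodule ℝ (EuclideanSpace ℝ (Fin n)))
    (u w ξ : EuclideanSpace ℝ (Fin n)) (s : ℝ)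
    (hK : K = (ℝ ∙ u)ᗮ ⊓ σ) (hσeq : K ⊔ (ℝ ∙ u) = σ) (hKd : 1 + Module.finrank ℝ K = d)
    (hu : ‖u‖ = 1) (hw : ‖w‖ = 1) (hwK : ∀ k ∈ K, ⟪k, w⟫_ℝ = 0) (hwξ : ⟪w, ξ⟫_ℝ = 0)
    (hKξ : ∀ k ∈ K, ⟪k, ξ⟫_ℝ = 0)
    (hbound : ∀ x, ‖⟪u, x⟫_ℝ • u - ⟪w, x⟫_ℝ • w‖ ≤ s * ‖x‖)
    (hs0 : 0 ≤ s) (hs : s < δ / 3) :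
    ∃ τ : Submodule ℝ (EuclideanSpace ℝ (Fin n)),
      Module.finrank ℝ τ = d ∧ projE τ ξ = 0 ∧ ‖projE σ - projE τ‖ < δ / 3 := by
  have hw0 : w ≠ 0 := fun h => by simp [h] at hw
  have huK : ∀ k ∈ K, ⟪k, u⟫_ℝ = 0 := by
    intro k hk
    rw [hK] at hk
    rw [real_inner_comm]
    exact hk.1 u (mem_span_singleton_self u) |>.symm ▸
      (hk.1 u (mem_span_singleton_self u))
  refine ⟨K ⊔ (ℝ ∙ w), ?_, ?_, ?_⟩
  · -- finrank
    have hdisj : K ⊓ (ℝ ∙ w) = ⊥ := by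
      rw [eq_bot_iff]
      rintro z ⟨hz1, hz2⟩
      obtain ⟨c, rfl⟩ := mem_span_singleton.1 hz2
      have := hwK _ hz1
      rw [real_inner_smul_left, real_inner_self_eq_norm_sq, hw] at this
      have hc : c = 0 := by simpa using this
      simp [hc]
    have := Submodule.finrank_sup_add_finrank_inf_eq K (ℝ ∙ w)
    rw [hdisj, finrank_bot, finrank_span_singleton hw0] at this
    omega
  · -- projection of ξ is zero
    rw [projE_sup_singleton K hw hwK, hwξ, zero_smul, add_zero, projE_apply]
    have : ξ ∈ Kᗮ := by
      rw [mem_orthogonal]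
      exact hKξ
    rw [orthogonalProjectionOnto_apply_of_mem_orthogonal this]
    simp
  · -- norm bound
    refine lt_of_le_of_lt (ContinuousLinearMap.opNorm_le_bound _ hs0 fun x => ?_) hs
    have h1 : projE σ x = projE K x + ⟪u, x⟫_ℝ • u := by
      rw [← hσeq]; exact projE_sup_singleton K hu huK x
    have h2 : projE (K ⊔ (ℝ ∙ w)) x = projE K x + ⟪w, x⟫_ℝ • w :=
      projE_sup_singleton K hw hwK x
    rw [ContinuousLinearMap.sub_apply, h1, h2]
    have : projE K x + ⟪u, x⟫_ℝ • u - (projE K x + ⟪w, x⟫_ℝ • w)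
        = ⟪u, x⟫_ℝ • u - ⟪w, x⟫_ℝ • w := by abel
    rw [this]
    exact hbound x

theorem stmt0 {n d : ℕ} (hd : 1 ≤ d) (hdn : d < n)
    (ξ : EuclideanSpace ℝ (Fin n)) (hξ : ξ ≠ 0) (δ : ℝ)
    (σ : Submodule ℝ (EuclideanSpace ℝ (Fin n)))
    (hσ : Module.finrank ℝ σ = d)
    (h1 : 0 < ‖projE σ ξ‖ / ‖ξ‖) (h2 : ‖projE σ ξ‖ / ‖ξ‖ < δ / 4) :
    ∃ τ : Submodule ℝ (EuclideanSpace ℝ (Fin n)),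
      Module.finrank ℝ τ = d ∧ projE τ ξ = 0 ∧ ‖projE σ - projE τ‖ < δ / 3 := by
  have hξn : 0 < ‖ξ‖ := norm_pos_iff.2 hξ
  set p : EuclideanSpace ℝ (Fin n) := projE σ ξ with hp
  have hpn : 0 < ‖p‖ := by
    by_contra h
    push_neg at h
    have h0 : ‖p‖ = 0 := le_antisymm h (norm_nonneg _)
    rw [h0, zero_div] at h1
    exact lt_irrefl 0 h1
  have hpσ : p ∈ σ := by rw [hp, projE_apply]; exact coe_mem _
  have hpo : ξ - p ∈ σᗮ := sub_starProjection_mem_orthogonal ξ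
  -- the unit vector u
  set u : EuclideanSpace ℝ (Fin n) := ‖p‖⁻¹ • p with hu_def
  have hu : ‖u‖ = 1 := by
    rw [hu_def, norm_smul, norm_inv, norm_norm, inv_mul_cancel₀ (ne_of_gt hpn)]
  have hu0 : u ≠ 0 := fun h => by simp [h] at hu
  have huσ : u ∈ σ := smul_mem _ _ hpσ
  have hpu : p = ‖p‖ • u := by
    rw [hu_def, smul_smul, mul_inv_cancel₀ (ne_of_gt hpn), one_smul]
  have hpξ : ⟪p, ξ⟫_ℝ = ‖p‖ ^ 2 := by
    have h0 : ⟪p, ξ - p⟫_ℝ = 0 := (mem_orthogonal σ (ξ - p)).1 hpo p hpσ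
    have : ⟪p, ξ⟫_ℝ - ⟪p, p⟫_ℝ = 0 := by rwa [← inner_sub_right]
    rw [real_inner_self_eq_norm_sq] at this
    linarith
  have huξ : ⟪u, ξ⟫_ℝ = ‖p‖ := by
    rw [hu_def, real_inner_smul_left, hpξ]
    field_simp
  -- the subspace K
  set K : Submodule ℝ (EuclideanSpace ℝ (Fin n)) := (ℝ ∙ u)ᗮ ⊓ σ with hK_def
  have hKξ : ∀ k ∈ K, ⟪k, ξ⟫_ℝ = 0 := by
    rintro k ⟨hk1, hk2⟩
    have hα : ⟪k, ξ - p⟫_ℝ = 0 := (mem_orthogonal σ (ξ - p)).1 hpo k hk2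
    have hβ : ⟪k, p⟫_ℝ = 0 := by
      rw [hpu, real_inner_smul_right, real_inner_comm,
        hk1 u (mem_span_singleton_self u), mul_zero]
    have : ⟪k, ξ⟫_ℝ - ⟪k, p⟫_ℝ = 0 := by rwa [← inner_sub_right]
    rw [hβ] at this; linarith
  have hKd : 1 + Module.finrank ℝ K = d := by
    have hle : (ℝ ∙ u) ≤ σ := by
      rw [span_le, Set.singleton_subset_iff]; exact huσ
    have := Submodule.finrank_add_inf_finrank_orthogonal hle
    rw [finrank_span_singleton hu0, hσ] at this
    rw [hK_def]
    omega
  have hσeq : K ⊔ (ℝ ∙ u) = σ := by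
    have hle : K ⊔ (ℝ ∙ u) ≤ σ := by
      apply sup_le inf_le_right
      rw [span_le, Set.singleton_subset_iff]; exact huσ
    have hdisj : K ⊓ (ℝ ∙ u) = ⊥ := by
      rw [eq_bot_iff]
      rintro z ⟨⟨hz1, _⟩, hz2⟩
      obtain ⟨c, rfl⟩ := mem_span_singleton.1 hz2
      have := hz1 u (mem_span_singleton_self u)
      rw [real_inner_smul_right, real_inner_self_eq_norm_sq, hu] at this
      have hc : c = 0 := by simpa using this
      simp [hc]
    apply Submodule.eq_of_le_of_finrank_eq hle
    have h5 := Submodule.finrank_sup_add_finrank_inf_eq K (ℝ ∙ u)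
    rw [hdisj, finrank_bot, finrank_span_singleton hu0] at h5
    rw [hσ]
    omega
  have hδ4 : ‖p‖ / ‖ξ‖ < δ / 4 := h2
  have hδpos : 0 < δ := by
    have := lt_trans h1 h2
    linarith
  have hple : ‖p‖ ≤ ‖ξ‖ := by
    have h0 : ⟪p, ξ - p⟫_ℝ = 0 := (mem_orthogonal σ (ξ - p)).1 hpo p hpσ
    have hpyth : ‖ξ‖ ^ 2 = ‖p‖ ^ 2 + ‖ξ - p‖ ^ 2 := by
      rw [← real_inner_self_eq_norm_sq, ← real_inner_self_eq_norm_sq,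
        ← real_inner_self_eq_norm_sq]
      simp only [inner_sub_left, inner_sub_right]
      have h0' : ⟪p, ξ⟫_ℝ - ⟪p, p⟫_ℝ = 0 := by rwa [← inner_sub_right]
      linarith [real_inner_comm p ξ, real_inner_comm ξ p]
    nlinarith [norm_nonneg (ξ - p), norm_nonneg p, norm_nonneg ξ]
  rcases lt_or_eq_of_le hple with hlt | heq
  · -- generic case : ‖p‖ < ‖ξ‖
    set t : ℝ := ‖p‖ / ‖ξ‖ with ht_def
    have ht0 : 0 < t := div_pos hpn hξn
    have ht1 : t < 1 := (div_lt_one hξn).2 hlt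
    set e : EuclideanSpace ℝ (Fin n) := ‖ξ‖⁻¹ • ξ with he_def
    have hee : ⟪e, e⟫_ℝ = 1 := by
      rw [he_def, real_inner_smul_left, real_inner_smul_right, real_inner_self_eq_norm_sq]
      field_simp
    have hue : ⟪u, e⟫_ℝ = t := by
      rw [he_def, real_inner_smul_right, huξ, ht_def]
      ring
    set u'' : EuclideanSpace ℝ (Fin n) := u - t • e with hu''_def
    have hu''sq : ⟪u'', u''⟫_ℝ = 1 - t ^ 2 := by
      rw [hu''_def]
      simp only [inner_sub_left, inner_sub_right, real_inner_smul_left, real_inner_smul_right,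
        hee, hue]
      rw [real_inner_comm u e, hue, real_inner_self_eq_norm_sq, hu]
      ring
    have hmsq : ‖u''‖ ^ 2 = 1 - t ^ 2 := by rw [← real_inner_self_eq_norm_sq, hu''sq]
    have hm0 : 0 < ‖u''‖ := by nlinarith [norm_nonneg u'']
    set m : ℝ := ‖u''‖ with hm_def
    set w : EuclideanSpace ℝ (Fin n) := m⁻¹ • u'' with hw_def
    have hwnorm : ‖w‖ = 1 := by
      rw [hw_def, norm_smul, norm_inv, norm_norm, ← hm_def, inv_mul_cancel₀ (ne_of_gt hm0)]
    have hww : ⟪w, w⟫_ℝ = 1 := by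
      rw [real_inner_self_eq_norm_sq, hwnorm]; norm_num
    have humw : u = m • w + t • e := by
      rw [hw_def, smul_smul, mul_inv_cancel₀ (ne_of_gt hm0), one_smul, hu''_def]
      abel
    have hwe : ⟪w, e⟫_ℝ = 0 := by
      have h5 : ⟪u'', e⟫_ℝ = 0 := by
        rw [hu''_def, inner_sub_left, hue, real_inner_smul_left, hee]
        ring
      rw [hw_def, real_inner_smul_left, h5, mul_zero]
    have hwξ : ⟪w, ξ⟫_ℝ = 0 := by
      have : ξ = ‖ξ‖ • e := by
        rw [he_def, smul_smul, mul_inv_cancel₀ (ne_of_gt hξn), one_smul]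
      rw [this, real_inner_smul_right, hwe, mul_zero]
    have hwK : ∀ k ∈ K, ⟪k, w⟫_ℝ = 0 := by
      intro k hk
      have hku : ⟪k, u⟫_ℝ = 0 := by
        rw [real_inner_comm]
        exact hk.1 u (mem_span_singleton_self u)
      have hkξ : ⟪k, ξ⟫_ℝ = 0 := hKξ k hk
      have hke : ⟪k, e⟫_ℝ = 0 := by
        rw [he_def, real_inner_smul_right, hkξ, mul_zero]
      have h6 : ⟪k, u''⟫_ℝ = 0 := by
        rw [hu''_def, inner_sub_right, hku, real_inner_smul_right, hke]
        ring
      rw [hw_def, real_inner_smul_right, h6, mul_zero]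
    have hbound : ∀ x, ‖⟪u, x⟫_ℝ • u - ⟪w, x⟫_ℝ • w‖ ≤ t * ‖x‖ := by
      intro x
      have := key_bound hww hee hwe (by nlinarith : m ^ 2 + t ^ 2 = 1) humw x
      rwa [abs_of_pos ht0] at this
    exact tau_spec σ K u w ξ t hK_def hσeq hKd hu hwnorm hwK hwξ hKξ hbound
      (le_of_lt ht0) (by linarith)
  · -- degenerate case : ‖p‖ = ‖ξ‖, so ξ = p ∈ σ
    have hξp : ξ = p := by
      have h0 : ⟪p, ξ - p⟫_ℝ = 0 := (mem_orthogonal σ (ξ - p)).1 hpo p hpσ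
      have hpyth : ‖ξ‖ ^ 2 = ‖p‖ ^ 2 + ‖ξ - p‖ ^ 2 := by
        rw [← real_inner_self_eq_norm_sq, ← real_inner_self_eq_norm_sq,
          ← real_inner_self_eq_norm_sq]
        simp only [inner_sub_left, inner_sub_right]
        have h0' : ⟪p, ξ⟫_ℝ - ⟪p, p⟫_ℝ = 0 := by rwa [← inner_sub_right]
        linarith [real_inner_comm p ξ, real_inner_comm ξ p]
      have : ‖ξ - p‖ = 0 := by nlinarith
      have := norm_eq_zero.1 this
      rw [sub_eq_zero] at this
      exact this
    have hδ4' : (4:ℝ) < δ := by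
      have : ‖p‖ / ‖ξ‖ = 1 := by rw [heq]; field_simp
      rw [this] at hδ4
      linarith
    -- pick a unit vector in σᗮ
    have hσbot : σᗮ ≠ ⊥ := by
      intro h
      have h2' := Submodule.finrank_add_finrank_orthogonal σ
      rw [h, finrank_bot, hσ, finrank_euclideanSpace_fin] at h2'
      omega
    obtain ⟨v, hvσ, hv0⟩ := Submodule.exists_mem_ne_zero_of_ne_bot hσbot
    set w : EuclideanSpace ℝ (Fin n) := ‖v‖⁻¹ • v with hw_def
    have hvn : 0 < ‖v‖ := norm_pos_iff.2 hv0
    have hwσ : w ∈ σᗮ := smul_mem _ _ hvσ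
    have hwnorm : ‖w‖ = 1 := by
      rw [hw_def, norm_smul, norm_inv, norm_norm, inv_mul_cancel₀ (ne_of_gt hvn)]
    have hww : ⟪w, w⟫_ℝ = 1 := by
      rw [real_inner_self_eq_norm_sq, hwnorm]; norm_num
    have hwu : ⟪w, u⟫_ℝ = 0 := by
      rw [real_inner_comm]
      exact (mem_orthogonal σ w).1 hwσ u huσ
    have huu : ⟪u, u⟫_ℝ = 1 := by
      rw [real_inner_self_eq_norm_sq, hu]; norm_num
    have hwξ : ⟪w, ξ⟫_ℝ = 0 := by
      rw [hξp, real_inner_comm]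
      exact (mem_orthogonal σ w).1 hwσ p hpσ
    have hwK : ∀ k ∈ K, ⟪k, w⟫_ℝ = 0 := by
      intro k hk
      exact (mem_orthogonal σ w).1 hwσ k hk.2
    have hbound : ∀ x, ‖⟪u, x⟫_ℝ • u - ⟪w, x⟫_ℝ • w‖ ≤ 1 * ‖x‖ := by
      intro x
      have := key_bound hww huu hwu (by norm_num : (0:ℝ) ^ 2 + (1:ℝ) ^ 2 = 1)
        (by rw [zero_smul, one_smul, zero_add]) x
      simpa using this
    exact tau_spec σ K u w ξ 1 hK_def hσeq hKd hu hwnorm hwK hwξ hKξ hbound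
      (by norm_num) (by linarith)
end

section
/- Let σ, τ be d-dimensional subspaces of ℝⁿ with principal vectors s_j ∈ σ, t_j ∈ τ and principal angles θ_j as in the canonical construction, and let j < k. If π_j = span{s_j, t_j} and π_k = span{s_k, t_k}, then every x ∈ π_j is orthogonal to every y ∈ π_k. -/
open Submodule RealInnerProductSpace

lemma small_of_max (c a : ℝ) (hc : 0 ≤ c)
    (h : ∀ ε : ℝ, c + ε * a ≤ c * Real.sqrt (1 + ε ^ 2)) : a = 0 := by
  have key : ∀ ε : ℝ, c + ε * a ≤ c * (1 + ε ^ 2) := by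
    intro ε
    refine (h ε).trans ?_
    have h1 : Real.sqrt (1 + ε ^ 2) ≤ 1 + ε ^ 2 := by
      have h0 := Real.sqrt_le_sqrt (show 1 + ε ^ 2 ≤ (1 + ε ^ 2) ^ 2 by nlinarith [sq_nonneg ε, sq_nonneg (ε^2)])
      rwa [Real.sqrt_sq (by positivity)] at h0
    nlinarith
  have key2 : ∀ ε : ℝ, ε * a ≤ c * ε ^ 2 := fun ε => by nlinarith [key ε]
  have hc1 : (0:ℝ) < c + 1 := by linarith
  have h2 := key2 (a / (c + 1))
  have e1 : a / (c+1) * a = a ^ 2 / (c+1) := by ring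
  rw [e1, div_pow, ← mul_div_assoc, div_le_div_iff₀ hc1 (by positivity)] at h2
  have h3 : a ^ 2 ≤ 0 := by nlinarith [sq_nonneg a]
  exact pow_eq_zero_iff two_ne_zero |>.mp (le_antisymm h3 (sq_nonneg a))

lemma ortho_of_max {E : Type*} [NormedAddCommGroup E] [InnerProductSpace ℝ E]
    (W : Submodule ℝ E) (u v w : E) (hv : v ∈ W) (hw : w ∈ W)
    (hvn : ‖v‖ = 1) (hwn : ‖w‖ = 1) (hvw : ⟪v, w⟫ = 0)
    (hc : 0 ≤ ⟪u, v⟫)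
    (hmax : ∀ x ∈ W, ‖x‖ = 1 → ⟪u, x⟫ ≤ ⟪u, v⟫) : ⟪u, w⟫ = 0 := by
  apply small_of_max ⟪u, v⟫ ⟪u, w⟫ hc
  intro ε
  have hsq : ‖v + ε • w‖ ^ 2 = 1 + ε ^ 2 := by
    rw [norm_add_sq_real, real_inner_smul_right, hvw, norm_smul, hvn, hwn]
    simp [mul_pow, sq_abs]
  have hnorm : ‖v + ε • w‖ = Real.sqrt (1 + ε ^ 2) := by
    rw [← Real.sqrt_sq (norm_nonneg (v + ε • w)), hsq]
  have hpos : 0 < ‖v + ε • w‖ := by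
    rw [hnorm]; exact Real.sqrt_pos.mpr (by positivity)
  have hxW : ‖v + ε • w‖⁻¹ • (v + ε • w) ∈ W :=
    W.smul_mem _ (W.add_mem hv (W.smul_mem _ hw))
  have hx1 : ‖‖v + ε • w‖⁻¹ • (v + ε • w)‖ = 1 := by
    rw [norm_smul, norm_inv, norm_norm, inv_mul_cancel₀ (ne_of_gt hpos)]
  have := hmax _ hxW hx1
  rw [real_inner_smul_right, inner_add_right, real_inner_smul_right] at this
  have h2 : ⟪u, v⟫ + ε * ⟪u, w⟫ ≤ ‖v + ε • w‖ * ⟪u, v⟫ := (inv_mul_le_iff₀ hpos).mp this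
  rw [hnorm] at h2
  rw [mul_comm] at h2
  linarith

lemma chain_le {β : Type*} [Preorder β] (f : ℕ → β) (m d : ℕ)
    (h : ∀ j, m ≤ j → j < d → f (j+1) ≤ f j) :
    ∀ i j, m ≤ i → i ≤ j → j ≤ d → f j ≤ f i := by
  intro i j hmi hij hjd
  induction j with
  | zero => rw [Nat.le_zero.mp hij]
  | succ j ih =>
    rcases Nat.lt_or_ge i (j+1) with hlt | hge
    · have hij' : i ≤ j := Nat.lt_succ_iff.mp hlt
      exact (h j (le_trans hmi hij') (Nat.lt_of_succ_le hjd)).trans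
        (ih hij' (le_trans (Nat.le_succ j) hjd))
    · exact le_of_eq (congrArg f (le_antisymm hge hij))

/-- The data of the inductive principal-angle construction between two `d`-dimensional
subspaces `σ, τ` of `ℝⁿ` whose intersection has dimension `m`:
`s, t` are the canonical vectors, `θ` the principal angles, and `σf, τf` the
residual subspaces, defined for indices `m ≤ j < d` (the first `m` vectors form a
common orthonormal basis of `σ ⊓ τ`). -/
def PrincipalData {n : ℕ} (d m : ℕ)
    (σ τ : Submodule ℝ (EuclideanSpace ℝ (Fin n)))
    (s t : ℕ → EuclideanSpace ℝ (Fin n)) (θ : ℕ → ℝ)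
    (σf τf : ℕ → Submodule ℝ (EuclideanSpace ℝ (Fin n))) : Prop :=
  Module.finrank ℝ ↥(σ ⊓ τ) = m ∧
  (∀ i < m, t i = s i) ∧
  Orthonormal ℝ (fun i : Fin m => s i) ∧
  span ℝ (s '' Set.Iio m) = σ ⊓ τ ∧
  σf m = σ ⊓ (σ ⊓ τ)ᗮ ∧ τf m = τ ⊓ (σ ⊓ τ)ᗮ ∧
  ∀ j, m ≤ j → j < d →
    s j ∈ σf j ∧ t j ∈ τf j ∧ ‖s j‖ = 1 ∧ ‖t j‖ = 1 ∧
    (∀ s' ∈ σf j, ∀ t' ∈ τf j, ‖s'‖ = 1 → ‖t'‖ = 1 → ⟪s', t'⟫ ≤ ⟪s j, t j⟫) ∧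
    θ j = Real.arccos ⟪s j, t j⟫ ∧
    σf (j + 1) = σf j ⊓ (span ℝ {s j})ᗮ ∧
    τf (j + 1) = τf j ⊓ (span ℝ {t j})ᗮ

theorem stmt3 {n d m : ℕ} (hd : 1 ≤ d) (hdn : d < n) (hm : m < d)
    (σ τ : Submodule ℝ (EuclideanSpace ℝ (Fin n)))
    (hσ : Module.finrank ℝ σ = d) (hτ : Module.finrank ℝ τ = d)
    (s t : ℕ → EuclideanSpace ℝ (Fin n)) (θ : ℕ → ℝ)
    (σf τf : ℕ → Submodule ℝ (EuclideanSpace ℝ (Fin n)))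
    (h : PrincipalData d m σ τ s t θ σf τf)
    (j k : ℕ) (hjk : j < k) (hk : k < d) :
    ∀ x ∈ span ℝ ({s j, t j} : Set (EuclideanSpace ℝ (Fin n))),
      ∀ y ∈ span ℝ ({s k, t k} : Set (EuclideanSpace ℝ (Fin n))),
        ⟪x, y⟫ = 0 := by
  obtain ⟨h1, h2, h3, h4, h5, h6, h7⟩ := h
  have σch := chain_le σf m d (fun i hmi hid => by
    rw [(h7 i hmi hid).2.2.2.2.2.2.1]; exact inf_le_left)
  have τch := chain_le τf m d (fun i hmi hid => by
    rw [(h7 i hmi hid).2.2.2.2.2.2.2]; exact inf_le_left)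
  have H : ∀ u ∈ ({s j, t j} : Set (EuclideanSpace ℝ (Fin n))),
      ∀ w ∈ ({s k, t k} : Set (EuclideanSpace ℝ (Fin n))), ⟪u, w⟫ = 0 := by
    rcases Nat.lt_or_ge j m with hjm | hmj
    · -- case j < m : s j = t j ∈ σ ⊓ τ
      have htsj : t j = s j := h2 j hjm
      have hsjστ : s j ∈ σ ⊓ τ := by
        rw [← h4]; exact subset_span (Set.mem_image_of_mem s hjm)
      have base : ∀ w ∈ ({s k, t k} : Set (EuclideanSpace ℝ (Fin n))), ⟪s j, w⟫ = 0 := by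
        intro w hw
        rcases Nat.lt_or_ge k m with hkm | hmk
        · have htsk : t k = s k := h2 k hkm
          have hw' : w = s k := by
            rcases hw with hw | hw
            · exact hw
            · rw [Set.mem_singleton_iff.mp hw, htsk]
          rw [hw']
          have hne : (⟨j, hjm⟩ : Fin m) ≠ ⟨k, hkm⟩ := by
            intro hcon
            exact (Nat.ne_of_lt hjk) (congrArg Fin.val hcon)
          exact h3.2 hne
        · have hkd : k ≤ d := le_of_lt hk
          have hk7 := h7 k hmk hk
          rcases hw with hw | hw
          · rw [hw]
            have hskm : s k ∈ σf m := σch m k le_rfl hmk hkd hk7.1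
            rw [h5] at hskm
            exact ((Submodule.mem_orthogonal _ _).mp hskm.2 (s j) hsjστ)
          · rw [Set.mem_singleton_iff.mp hw]
            have htkm : t k ∈ τf m := τch m k le_rfl hmk hkd hk7.2.1
            rw [h6] at htkm
            exact ((Submodule.mem_orthogonal _ _).mp htkm.2 (s j) hsjστ)
      intro u hu w hw
      have hu' : u = s j := by
        rcases hu with hu | hu
        · exact hu
        · rw [Set.mem_singleton_iff.mp hu, htsj]
      rw [hu']; exact base w hw
    · -- case m ≤ j
      have hjd : j < d := lt_trans hjk hk
      have hmk : m ≤ k := le_trans hmj (le_of_lt hjk)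
      obtain ⟨hsj, htj, hsjn, htjn, hmaxj, -, hσeq, hτeq⟩ := h7 j hmj hjd
      obtain ⟨hsk, htk, hskn, htkn, -, -, -, -⟩ := h7 k hmk hk
      have hskj : s k ∈ σf (j+1) := σch (j+1) k (le_trans hmj (Nat.le_succ j)) hjk (le_of_lt hk) hsk
      have htkj : t k ∈ τf (j+1) := τch (j+1) k (le_trans hmj (Nat.le_succ j)) hjk (le_of_lt hk) htk
      rw [hσeq] at hskj
      rw [hτeq] at htkj
      have hss : ⟪s j, s k⟫ = 0 :=
        (Submodule.mem_orthogonal _ _).mp hskj.2 (s j) (Submodule.mem_span_singleton_self _)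
      have htt : ⟪t j, t k⟫ = 0 :=
        (Submodule.mem_orthogonal _ _).mp htkj.2 (t j) (Submodule.mem_span_singleton_self _)
      have hc : 0 ≤ ⟪s j, t j⟫ := by
        have hneg := hmaxj (s j) hsj (-(t j)) (Submodule.neg_mem _ htj) hsjn (by rw [norm_neg]; exact htjn)
        rw [inner_neg_right] at hneg
        linarith
      have hst : ⟪s j, t k⟫ = 0 := by
        refine ortho_of_max (τf j) (s j) (t j) (t k) htj htkj.1 htjn htkn htt hc ?_
        exact fun x hx hxn => hmaxj (s j) hsj x hx hsjn hxn
      have hts : ⟪t j, s k⟫ = 0 := by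
        refine ortho_of_max (σf j) (t j) (s j) (s k) hsj hskj.1 hsjn hskn hss ?_ ?_
        · rw [real_inner_comm (s j) (t j)]; exact hc
        · intro x hx hxn
          rw [real_inner_comm (s j) (t j), real_inner_comm x (t j)]
          exact hmaxj x hx (t j) htj hxn htjn
      intro u hu w hw
      rcases hu with hu | hu <;> rcases hw with hw | hw <;>
        simp -failIfUnchanged only [Set.mem_singleton_iff] at * <;> subst hu <;> subst hw <;> assumption
  intro x hx y hy
  have Hy : ∀ u ∈ ({s j, t j} : Set (EuclideanSpace ℝ (Fin n))), ⟪u, y⟫ = 0 := by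
    intro u hu
    induction hy using Submodule.span_induction with
    | mem w hw => exact H u hu w hw
    | zero => exact inner_zero_right u
    | add a b _ _ ha hb => rw [inner_add_right, ha, hb, add_zero]
    | smul r a _ ha => rw [real_inner_smul_right, ha, mul_zero]
  induction hx using Submodule.span_induction with
  | mem u hu => exact Hy u hu
  | zero => exact inner_zero_left y
  | add a b _ _ ha hb => rw [inner_add_left, ha, hb, add_zero]
  | smul r a _ ha => rw [real_inner_smul_left, ha, mul_zero]
end

section
/- Let σ, τ ∈ Gr(d,n) with m = dim(σ ∩ τ) and principal angles θ_{m+1} ≤ … ≤ θ_d. Let P(σ) = a + T_δ(σ) and P(τ) = b + T_δ(τ) be translates of the δ-plates T_δ(ρ) = {x ∈ ℝⁿ : |Π_ρ x| ≤ 1, |Π_{ρ^⊥} x| < δ}. Then the Lebesgue measure of P(σ) ∩ P(τ) is at most C(n,d) · δ^{n−m} · ∏_{j=m+1}^{d} (max{δ, θ_j})^{−1}. -/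
open Submodule RealInnerProductSpace

lemma proj_eq_of_max {E : Type*} [NormedAddCommGroup E] [InnerProductSpace ℝ E]
    (U : Submodule ℝ E) [HasOrthogonalProjection U] (x t0 : E) (ht0 : t0 ∈ U) (ht0n : ‖t0‖ = 1)
    (hmax : ∀ u ∈ U, ‖u‖ = 1 → ⟪x, u⟫ ≤ ⟪x, t0⟫) :
    (orthogonalProjection U x : E) = ⟪x, t0⟫ • t0 := by
  set c := ⟪x, t0⟫ with hc
  set p : E := (orthogonalProjection U x : E) with hp
  have hpU : p ∈ U := (orthogonalProjection U x).2
  have hxp : ∀ w ∈ U, ⟪x, w⟫ = ⟪p, w⟫ := by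
    intro w hw
    have h0 : ⟪x - p, w⟫ = 0 := by
      have h := Submodule.starProjection_inner_eq_zero x w hw
      rwa [Submodule.starProjection_apply] at h
    rw [inner_sub_left] at h0
    linarith
  have hct : c = ⟪p, t0⟫ := hxp t0 ht0
  by_cases hp0 : p = 0
  · have hc0 : c = 0 := by rw [hct, hp0, inner_zero_left]
    rw [hp0, hc0, zero_smul]
  · have hpn : (0:ℝ) < ‖p‖ := norm_pos_iff.2 hp0
    have hu : ‖p‖⁻¹ • p ∈ U := U.smul_mem _ hpU
    have hun : ‖‖p‖⁻¹ • p‖ = 1 := by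
      rw [norm_smul, norm_inv, norm_norm, inv_mul_cancel₀ hpn.ne']
    have h1 : ‖p‖ ≤ c := by
      have h2 := hmax _ hu hun
      rw [real_inner_smul_right, hxp p hpU, real_inner_self_eq_norm_mul_norm] at h2
      have : ‖p‖⁻¹ * (‖p‖ * ‖p‖) = ‖p‖ := by field_simp
      rw [this] at h2
      exact h2
    have h2 : c ≤ ‖p‖ := by
      rw [hct]
      calc ⟪p, t0⟫ ≤ ‖p‖ * ‖t0‖ := real_inner_le_norm p t0
        _ = ‖p‖ := by rw [ht0n, mul_one]
    have hceq : c = ‖p‖ := le_antisymm h2 h1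
    have heqcase : ⟪p, t0⟫ = ‖p‖ * ‖t0‖ := by rw [← hct, hceq, ht0n, mul_one]
    have := inner_eq_norm_mul_iff_real.1 heqcase
    rw [ht0n, one_smul] at this
    rw [this, hceq]

/-- The δ-plate oriented along the subspace σ. -/
def plate {n : ℕ} (σ : Submodule ℝ (EuclideanSpace ℝ (Fin n))) (δ : ℝ) :
    Set (EuclideanSpace ℝ (Fin n)) :=
  {x | ‖projE σ x‖ ≤ 1 ∧ ‖projE σᗮ x‖ < δ}


section Main

variable {n : ℕ}

set_option maxHeartbeats 2000000 in
open MeasureTheory in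
theorem stmt5 (n d : ℕ) (hd : 1 ≤ d) (hdn : d < n) :
    ∃ C > 0, ∀ (δ : ℝ), 0 < δ → δ ≤ 1 →
      ∀ (m : ℕ), m < d →
        ∀ (σ τ : Submodule ℝ (EuclideanSpace ℝ (Fin n))),
          Module.finrank ℝ σ = d → Module.finrank ℝ τ = d →
          ∀ (s t : ℕ → EuclideanSpace ℝ (Fin n)) (θ : ℕ → ℝ)
            (σf τf : ℕ → Submodule ℝ (EuclideanSpace ℝ (Fin n))),
            PrincipalData d m σ τ s t θ σf τf →
            ∀ a b : EuclideanSpace ℝ (Fin n),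
              volume (((a + ·) '' plate σ δ) ∩ ((b + ·) '' plate τ δ)) ≤
                ENNReal.ofReal
                  (C * δ ^ (n - m) * ∏ j ∈ Finset.Ico m d, (max δ (θ j))⁻¹) := by
  have hπ : (1:ℝ) ≤ Real.pi := by linarith [Real.pi_gt_three]
  refine ⟨(2 * Real.pi) ^ n, by positivity, ?_⟩
  intro δ hδ hδ1 m hmd σ τ hσd hτd s t θ σf τf hP a b
  obtain ⟨hm, hts, hON0, hspan0, hσfm, hτfm, hstep⟩ := hP

  -- monotonicity of the residual flags
  have hσstep : ∀ j, m ≤ j → j < d → σf (j + 1) ≤ σf j := by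
    intro j h1 h2
    rw [(hstep j h1 h2).2.2.2.2.2.2.1]; exact inf_le_left
  have hτstep : ∀ j, m ≤ j → j < d → τf (j + 1) ≤ τf j := by
    intro j h1 h2
    rw [(hstep j h1 h2).2.2.2.2.2.2.2]; exact inf_le_left
  have hσmono : ∀ k, k ≤ d → ∀ j, m ≤ j → j ≤ k → σf k ≤ σf j := by
    intro k
    induction k with
    | zero => intro _ j _ hj; exact le_of_eq (by rw [Nat.le_zero.mp hj])
    | succ k ih =>
      intro hkd j hmj hjk
      rcases Nat.eq_or_lt_of_le hjk with rfl | h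
      · exact le_refl _
      · have hjk' : j ≤ k := Nat.lt_succ_iff.mp h
        have hkd' : k < d := Nat.lt_of_succ_le hkd
        exact le_trans (hσstep k (le_trans hmj hjk') hkd') (ih (le_of_lt hkd') j hmj hjk')
  have hτmono : ∀ k, k ≤ d → ∀ j, m ≤ j → j ≤ k → τf k ≤ τf j := by
    intro k
    induction k with
    | zero => intro _ j _ hj; exact le_of_eq (by rw [Nat.le_zero.mp hj])
    | succ k ih =>
      intro hkd j hmj hjk
      rcases Nat.eq_or_lt_of_le hjk with rfl | h
      · exact le_refl _
      · have hjk' : j ≤ k := Nat.lt_succ_iff.mp h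
        have hkd' : k < d := Nat.lt_of_succ_le hkd
        exact le_trans (hτstep k (le_trans hmj hjk') hkd') (ih (le_of_lt hkd') j hmj hjk')
  have hσfσ : ∀ j, m ≤ j → j ≤ d → σf j ≤ σ :=
    fun j hmj hjd => le_trans (hσmono j hjd m le_rfl hmj) (by rw [hσfm]; exact inf_le_left)
  have hτfτ : ∀ j, m ≤ j → j ≤ d → τf j ≤ τ :=
    fun j hmj hjd => le_trans (hτmono j hjd m le_rfl hmj) (by rw [hτfm]; exact inf_le_left)
  have hsmem : ∀ j, m ≤ j → j < d → s j ∈ σf j := fun j h1 h2 => (hstep j h1 h2).1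
  have htmem : ∀ j, m ≤ j → j < d → t j ∈ τf j := fun j h1 h2 => (hstep j h1 h2).2.1
  have hsστ : ∀ i, i < m → s i ∈ σ ⊓ τ := by
    intro i hi; rw [← hspan0]; exact subset_span ⟨i, hi, rfl⟩
  have hsσ : ∀ i, i < d → s i ∈ σ := by
    intro i hi
    rcases Nat.lt_or_ge i m with h | h
    · exact (hsστ i h).1
    · exact hσfσ i h (le_of_lt hi) (hsmem i h hi)
  have htτ : ∀ i, i < d → t i ∈ τ := by
    intro i hi
    rcases Nat.lt_or_ge i m with h | h
    · rw [hts i h]; exact (hsστ i h).2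
    · exact hτfτ i h (le_of_lt hi) (htmem i h hi)
  have hsn : ∀ i, i < d → ‖s i‖ = 1 := by
    intro i hi
    rcases Nat.lt_or_ge i m with h | h
    · simpa using hON0.1 ⟨i, h⟩
    · exact (hstep i h hi).2.2.1
  have htn : ∀ i, i < d → ‖t i‖ = 1 := by
    intro i hi
    rcases Nat.lt_or_ge i m with h | h
    · rw [hts i h]; simpa using hON0.1 ⟨i, h⟩
    · exact (hstep i h hi).2.2.2.1
  -- orthogonality within s, within t
  have hsperp : ∀ j, m ≤ j → j < d → s j ∈ (σ ⊓ τ)ᗮ := by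
    intro j h1 h2
    have := hσmono j (le_of_lt h2) m le_rfl h1 (hsmem j h1 h2)
    rw [hσfm] at this; exact this.2
  have htperp : ∀ j, m ≤ j → j < d → t j ∈ (σ ⊓ τ)ᗮ := by
    intro j h1 h2
    have := hτmono j (le_of_lt h2) m le_rfl h1 (htmem j h1 h2)
    rw [hτfm] at this; exact this.2
  have hss : ∀ i j, i < j → j < d → ⟪s i, s j⟫ = 0 := by
    intro i j hij hjd
    rcases Nat.lt_or_ge j m with hjm | hjm
    · have h2 := hON0.2 (i := ⟨i, lt_trans hij hjm⟩) (j := ⟨j, hjm⟩)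
        (by simp [Fin.ext_iff]; omega)
      simpa using h2
    · rcases Nat.lt_or_ge i m with him | him
      · exact (Submodule.mem_orthogonal _ _).1 (hsperp j hjm hjd) _ (hsστ i him)
      · have h1 : s j ∈ σf (i + 1) :=
          hσmono j (le_of_lt hjd) (i + 1) (le_trans him (Nat.le_succ i)) hij (hsmem j hjm hjd)
        rw [(hstep i him (lt_trans hij hjd)).2.2.2.2.2.2.1] at h1
        exact Submodule.mem_orthogonal_singleton_iff_inner_right.1 h1.2
  have htt : ∀ i j, i < j → j < d → ⟪t i, t j⟫ = 0 := by
    intro i j hij hjd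
    rcases Nat.lt_or_ge j m with hjm | hjm
    · rw [hts i (lt_trans hij hjm), hts j hjm]
      exact hss i j hij (lt_trans hjm hmd)
    · rcases Nat.lt_or_ge i m with him | him
      · rw [hts i him]
        exact (Submodule.mem_orthogonal _ _).1 (htperp j hjm hjd) _ (hsστ i him)
      · have h1 : t j ∈ τf (i + 1) :=
          hτmono j (le_of_lt hjd) (i + 1) (le_trans him (Nat.le_succ i)) hij (htmem j hjm hjd)
        rw [(hstep i him (lt_trans hij hjd)).2.2.2.2.2.2.2] at h1
        exact Submodule.mem_orthogonal_singleton_iff_inner_right.1 h1.2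
  have hss' : ∀ i j, i < d → j < d → i ≠ j → ⟪s i, s j⟫ = 0 := by
    intro i j hi hj hne
    rcases Nat.lt_or_ge i j with h | h
    · exact hss i j h hj
    · rw [real_inner_comm]; exact hss j i (lt_of_le_of_ne h (Ne.symm hne)) hi
  have htt' : ∀ i j, i < d → j < d → i ≠ j → ⟪t i, t j⟫ = 0 := by
    intro i j hi hj hne
    rcases Nat.lt_or_ge i j with h | h
    · exact htt i j h hj
    · rw [real_inner_comm]; exact htt j i (lt_of_le_of_ne h (Ne.symm hne)) hi
  -- principal angle cosines
  set c : ℕ → ℝ := fun j => ⟪s j, t j⟫ with hcdef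
  have hc0 : ∀ j, m ≤ j → j < d → 0 ≤ c j := by
    intro j h1 h2
    have hmax := (hstep j h1 h2).2.2.2.2.1
    have h3 := hmax (s j) (hsmem j h1 h2) (-(t j)) (neg_mem (htmem j h1 h2))
      ((hstep j h1 h2).2.2.1) (by rw [norm_neg]; exact (hstep j h1 h2).2.2.2.1)
    rw [inner_neg_right] at h3
    simp only [hcdef]; linarith
  have hc1 : ∀ j, m ≤ j → j < d → c j ≤ 1 := by
    intro j h1 h2
    have h3 := real_inner_le_norm (s j) (t j)
    rw [hsn j h2, htn j h2, one_mul] at h3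
    exact h3
  have hprojτ : ∀ j, m ≤ j → j < d → (orthogonalProjection (τf j) (s j) : EuclideanSpace ℝ (Fin n)) = c j • t j := by
    intro j h1 h2
    exact proj_eq_of_max _ _ _ (htmem j h1 h2) ((hstep j h1 h2).2.2.2.1)
      (fun u hu hun => (hstep j h1 h2).2.2.2.2.1 (s j) (hsmem j h1 h2) u hu
        ((hstep j h1 h2).2.2.1) hun)
  have hprojσ : ∀ j, m ≤ j → j < d → (orthogonalProjection (σf j) (t j) : EuclideanSpace ℝ (Fin n)) = c j • s j := by
    intro j h1 h2
    have := proj_eq_of_max (σf j) (t j) (s j) (hsmem j h1 h2) ((hstep j h1 h2).2.2.1)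
      (fun u hu hun => by
        rw [real_inner_comm u (t j), real_inner_comm (s j) (t j)]
        exact (hstep j h1 h2).2.2.2.2.1 u hu (t j) (htmem j h1 h2) hun
          ((hstep j h1 h2).2.2.2.1))
    rwa [real_inner_comm (s j) (t j)] at this
  -- cross orthogonality
  have hst : ∀ i j, i < d → m ≤ j → j < d → i ≠ j → ⟪s i, t j⟫ = 0 := by
    intro i j hid hmj hjd hne
    rcases Nat.lt_or_ge i m with him | him
    · exact (Submodule.mem_orthogonal _ _).1 (htperp j hmj hjd) _ (hsστ i him)
    · rcases Nat.lt_or_ge i j with h | h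
      · have hmemt : t j ∈ τf i := hτmono j (le_of_lt hjd) i him (le_of_lt h) (htmem j hmj hjd)
        have h0 := Submodule.starProjection_inner_eq_zero (K := τf i) (s i) (t j) hmemt
        rw [Submodule.starProjection_apply, inner_sub_left, hprojτ i him hid, real_inner_smul_left, htt i j h hjd,
          mul_zero] at h0
        linarith
      · have hji : j < i := lt_of_le_of_ne h (Ne.symm hne)
        have hmems : s i ∈ σf j := hσmono i (le_of_lt hid) j hmj (le_of_lt hji) (hsmem i him hid)
        have h0 := Submodule.starProjection_inner_eq_zero (K := σf j) (t j) (s i) hmems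
        rw [Submodule.starProjection_apply, inner_sub_left, hprojσ j hmj hjd, real_inner_smul_left,
          real_inner_comm (s i) (s j), hss' i j hid hjd hne, mul_zero] at h0
        rw [real_inner_comm]
        linarith
  -- full cross inner product: ⟪s i, t j⟫ for any i < d, j < d
  have hstfull : ∀ i j, i < d → j < d → i ≠ j → ⟪s i, t j⟫ = 0 := by
    intro i j hid hjd hne
    rcases Nat.lt_or_ge j m with hjm | hjm
    · rw [hts j hjm]; exact hss' i j hid (lt_trans hjm hmd) hne
    · exact hst i j hid hjm hjd hne
  -- spans
  haveI hndpos : Nonempty (Fin d) := ⟨⟨0, hd⟩⟩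
  have hsONf : Orthonormal ℝ (fun i : Fin d => s i) := by
    rw [orthonormal_iff_ite]
    intro i j
    by_cases h : i = j
    · subst h; rw [if_pos rfl, real_inner_self_eq_norm_mul_norm, hsn i i.2]; norm_num
    · rw [if_neg h]; exact hss' i j i.2 j.2 (fun he => h (Fin.ext he))
  have htONf : Orthonormal ℝ (fun i : Fin d => t i) := by
    rw [orthonormal_iff_ite]
    intro i j
    by_cases h : i = j
    · subst h; rw [if_pos rfl, real_inner_self_eq_norm_mul_norm, htn i i.2]; norm_num
    · rw [if_neg h]; exact htt' i j i.2 j.2 (fun he => h (Fin.ext he))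
  have hsspan : span ℝ (Set.range (fun i : Fin d => s i)) = σ := by
    let f : Fin d → σ := fun i => ⟨s i, hsσ i i.2⟩
    have hfON : Orthonormal ℝ f := by
      rw [orthonormal_iff_ite] at hsONf ⊢
      intro i j
      have h2 := hsONf i j
      rwa [Submodule.coe_inner]
    have hcard : Fintype.card (Fin d) = Module.finrank ℝ σ := by simp [hσd]
    have htop := hfON.linearIndependent.span_eq_top_of_card_eq_finrank hcard
    have h2 := congrArg (Submodule.map σ.subtype) htop
    rw [Submodule.map_span, Submodule.map_top, Submodule.range_subtype] at h2
    rw [← h2]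
    congr 1
    rw [← Set.range_comp]
    rfl
  have htspan : span ℝ (Set.range (fun i : Fin d => t i)) = τ := by
    let f : Fin d → τ := fun i => ⟨t i, htτ i i.2⟩
    have hfON : Orthonormal ℝ f := by
      rw [orthonormal_iff_ite] at htONf ⊢
      intro i j
      have h2 := htONf i j
      rwa [Submodule.coe_inner]
    have hcard : Fintype.card (Fin d) = Module.finrank ℝ τ := by simp [hτd]
    have htop := hfON.linearIndependent.span_eq_top_of_card_eq_finrank hcard
    have h2 := congrArg (Submodule.map τ.subtype) htop
    rw [Submodule.map_span, Submodule.map_top, Submodule.range_subtype] at h2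
    rw [← h2]
    congr 1
    rw [← Set.range_comp]
    rfl
  have horthσ : ∀ w : EuclideanSpace ℝ (Fin n), (∀ i, i < d → ⟪s i, w⟫ = 0) → w ∈ σᗮ := by
    intro w hw
    rw [← hsspan, Submodule.mem_orthogonal]
    intro u hu
    have hsub : span ℝ (Set.range fun i : Fin d => s i) ≤ (ℝ ∙ w)ᗮ := by
      refine Submodule.span_le.2 ?_
      rintro _ ⟨i, rfl⟩
      exact Submodule.mem_orthogonal_singleton_iff_inner_left.2 (hw i i.2)
    exact Submodule.mem_orthogonal_singleton_iff_inner_left.1 (hsub hu)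
  have horthτ : ∀ w : EuclideanSpace ℝ (Fin n), (∀ i, i < d → ⟪t i, w⟫ = 0) → w ∈ τᗮ := by
    intro w hw
    rw [← htspan, Submodule.mem_orthogonal]
    intro u hu
    have hsub : span ℝ (Set.range fun i : Fin d => t i) ≤ (ℝ ∙ w)ᗮ := by
      refine Submodule.span_le.2 ?_
      rintro _ ⟨i, rfl⟩
      exact Submodule.mem_orthogonal_singleton_iff_inner_left.2 (hw i i.2)
    exact Submodule.mem_orthogonal_singleton_iff_inner_left.1 (hsub hu)
  -- the normal directions v j
  set v : ℕ → EuclideanSpace ℝ (Fin n) := fun j => s j - c j • t j with hvdef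
  have hvτ : ∀ j, m ≤ j → j < d → v j ∈ τᗮ := by
    intro j h1 h2
    apply horthτ
    intro i hid
    rw [inner_sub_right, real_inner_smul_right]
    by_cases hij : i = j
    · subst hij
      rw [real_inner_comm (s i) (t i), real_inner_self_eq_norm_mul_norm, htn i hid]
      simp [hcdef]
    · rw [real_inner_comm (s j) (t i), hstfull j i h2 hid (Ne.symm hij),
        htt' i j hid h2 hij, mul_zero, sub_zero]
  have hvs : ∀ j, m ≤ j → j < d → ∀ i, i < d → ⟪v j, s i⟫ = if i = j then 1 - c j ^ 2 else 0 := by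
    intro j h1 h2 i hid
    rw [inner_sub_left, real_inner_smul_left]
    by_cases hij : i = j
    · subst hij
      rw [if_pos rfl, real_inner_self_eq_norm_mul_norm, hsn i hid,
        real_inner_comm (s i) (t i)]
      simp only [hcdef]; ring_nf
    · rw [if_neg hij, hss' j i h2 hid (Ne.symm hij), real_inner_comm (s i) (t j),
        hstfull i j hid h2 hij, mul_zero, sub_zero]
  have hvσ : ∀ j, m ≤ j → j < d → v j - (1 - c j ^ 2) • s j ∈ σᗮ := by
    intro j h1 h2
    apply horthσ
    intro i hid
    rw [inner_sub_right, real_inner_smul_right, real_inner_comm (v j) (s i), hvs j h1 h2 i hid]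
    by_cases hij : i = j
    · subst hij
      rw [if_pos rfl, real_inner_self_eq_norm_mul_norm, hsn i hid]
      ring
    · rw [if_neg hij, hss' i j hid h2 hij, mul_zero, sub_zero]
  have hvt : ∀ j, m ≤ j → j < d → ⟪v j, t j⟫ = 0 := by
    intro j h1 h2
    rw [inner_sub_left, real_inner_smul_left, real_inner_self_eq_norm_mul_norm, htn j h2]
    simp [hcdef]
  have hvnsq : ∀ j, m ≤ j → j < d → ‖v j‖ ^ 2 = 1 - c j ^ 2 := by
    intro j h1 h2
    have : ⟪v j, v j⟫ = 1 - c j ^ 2 := by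
      conv_lhs => rw [hvdef]
      simp only
      rw [inner_sub_right, real_inner_smul_right, hvt j h1 h2, mul_zero, sub_zero]
      have := hvs j h1 h2 j h2
      rw [if_pos rfl] at this
      exact this
    rw [← real_inner_self_eq_norm_sq, this]
  -- generic projection fact
  have hinner_mem : ∀ (K : Submodule ℝ (EuclideanSpace ℝ (Fin n)))
      (w y : EuclideanSpace ℝ (Fin n)), w ∈ K → ⟪w, y⟫ = ⟪w, projE K y⟫ := by
    intro K w y hw
    have h0 : ⟪w, y - (orthogonalProjection K y : EuclideanSpace ℝ (Fin n))⟫ = 0 :=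
      Submodule.inner_right_of_mem_orthogonal hw (by
        have h := Submodule.sub_starProjection_mem_orthogonal (K := K) y
        rwa [Submodule.starProjection_apply] at h)
    rw [inner_sub_right] at h0
    have : projE K y = (orthogonalProjection K y : EuclideanSpace ℝ (Fin n)) := rfl
    rw [this]
    linarith
  -- extend s to an orthonormal basis of the whole space
  have hcardn : Module.finrank ℝ (EuclideanSpace ℝ (Fin n)) = Fintype.card (Fin n) := by simp
  have hres : Orthonormal ℝ
      (({i : Fin n | (i : ℕ) < d} : Set (Fin n)).restrict
        (fun i : Fin n => if (i : ℕ) < d then s i else 0)) := by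
    rw [orthonormal_iff_ite]
    rintro ⟨i, hi⟩ ⟨j, hj⟩
    have hi' : (i : ℕ) < d := hi
    have hj' : (j : ℕ) < d := hj
    show ⟪(if (i : ℕ) < d then s i else 0), (if (j : ℕ) < d then s j else 0)⟫ = _
    rw [if_pos hi', if_pos hj']
    by_cases h : i = j
    · subst h
      rw [if_pos rfl, real_inner_self_eq_norm_mul_norm, hsn _ hi']
      norm_num
    · have hne : (⟨i, hi⟩ : {k : Fin n | (k : ℕ) < d}) ≠ ⟨j, hj⟩ := by
        simp only [ne_eq, Subtype.mk.injEq]; exact h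
      rw [if_neg hne]
      exact hss' i j hi' hj' (fun he => h (Fin.ext he))
  obtain ⟨B, hB⟩ := hres.exists_orthonormalBasis_extension_of_card_eq hcardn
  have hBs : ∀ i : Fin n, (i : ℕ) < d → B i = s i := by
    intro i hi
    rw [hB i hi]
    exact if_pos hi
  have hBσ : ∀ i : Fin n, ¬ ((i : ℕ) < d) → B i ∈ σᗮ := by
    intro i hi
    apply horthσ
    intro k hk
    have hkn : k < n := lt_trans hk hdn
    have hne : (⟨k, hkn⟩ : Fin n) ≠ i := by
      intro he
      rw [← he] at hi
      exact hi hk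
    have h0 : ⟪B ⟨k, hkn⟩, B i⟫ = 0 := B.orthonormal.2 hne
    rwa [hBs ⟨k, hkn⟩ hk] at h0
  -- the index set of large principal angles
  set Jset : Finset ℕ := (Finset.Ico m d).filter (fun j => δ < θ j) with hJdef
  have hJsub : ∀ j, j ∈ Jset → m ≤ j ∧ j < d ∧ δ < θ j := by
    intro j hj
    rw [hJdef, Finset.mem_filter, Finset.mem_Ico] at hj
    exact ⟨hj.1.1, hj.1.2, hj.2⟩
  have hθeq : ∀ j, m ≤ j → j < d → θ j = Real.arccos (c j) :=
    fun j h1 h2 => (hstep j h1 h2).2.2.2.2.2.1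
  have hcsq : ∀ j, j ∈ Jset → 0 < 1 - c j ^ 2 := by
    intro j hj
    obtain ⟨h1, h2, h3⟩ := hJsub j hj
    have hle := hc1 j h1 h2
    have hge := hc0 j h1 h2
    have hlt : c j < 1 := by
      rcases lt_or_eq_of_le hle with h | h
      · exact h
      · exfalso
        rw [hθeq j h1 h2, h, Real.arccos_one] at h3
        linarith
    nlinarith
  have hvpos : ∀ j, j ∈ Jset → 0 < ‖v j‖ := by
    intro j hj
    have h2 := hvnsq j (hJsub j hj).1 (hJsub j hj).2.1
    nlinarith [norm_nonneg (v j), hcsq j hj]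
  -- the coordinate box
  set Ib : ℕ → Set ℝ := fun k =>
    if k ∈ Jset then
      Set.Icc ((⟪v k, b - a⟫ - 2*δ*‖v k‖)/(1 - c k ^ 2)) ((⟪v k, b - a⟫ + 2*δ*‖v k‖)/(1 - c k ^ 2))
    else if k < d then Set.Icc (-1 : ℝ) 1 else Set.Icc (-δ) δ with hIb
  set box : Set (EuclideanSpace ℝ (Fin n)) := {z | ∀ i : Fin n, z i ∈ Ib (i : ℕ)} with hbox
  -- the inclusion
  have hincl : ((a + ·) '' plate σ δ) ∩ ((b + ·) '' plate τ δ) ⊆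
      (fun x => -a + x) ⁻¹' (⇑B.repr ⁻¹' box) := by
    rintro x ⟨⟨y₁, hy₁, hx₁⟩, ⟨y₂, hy₂, hx₂⟩⟩
    obtain ⟨hp1, hp2⟩ := hy₁
    obtain ⟨hq1, hq2⟩ := hy₂
    have hy1x : y₁ = -a + x := by rw [← hx₁]; exact (neg_add_cancel_left a y₁).symm
    have hy2x : y₂ = -b + x := by rw [← hx₂]; exact (neg_add_cancel_left b y₂).symm
    rw [hy1x] at hp1 hp2
    rw [hy2x] at hq1 hq2
    simp only [Set.mem_preimage, hbox, Set.mem_setOf_eq]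
    intro i
    have hrepr : B.repr (-a + x) i = ⟪B i, -a + x⟫ := B.repr_apply_apply (-a + x) i
    simp only [hIb]
    by_cases hiJ : (i : ℕ) ∈ Jset
    · obtain ⟨h1, h2, h3⟩ := hJsub _ hiJ
      have hD := hcsq _ hiJ
      rw [if_pos hiJ]
      have e1 : |⟪v (i : ℕ), -b + x⟫| ≤ δ * ‖v (i : ℕ)‖ := by
        rw [hinner_mem τᗮ _ _ (hvτ _ h1 h2)]
        calc |⟪v (i : ℕ), projE τᗮ (-b + x)⟫| ≤ ‖v (i : ℕ)‖ * ‖projE τᗮ (-b + x)‖ :=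
              abs_real_inner_le_norm _ _
          _ ≤ ‖v (i : ℕ)‖ * δ := mul_le_mul_of_nonneg_left (le_of_lt hq2) (norm_nonneg _)
          _ = δ * ‖v (i : ℕ)‖ := mul_comm _ _
      have e2 : ⟪v (i : ℕ), -a + x⟫ = ⟪v (i : ℕ), -b + x⟫ + ⟪v (i : ℕ), b - a⟫ := by
        rw [← inner_add_right]
        congr 1
        abel
      have e4a : ⟪v (i : ℕ) - (1 - c (i : ℕ) ^ 2) • s (i : ℕ), s (i : ℕ)⟫ = 0 := by
        rw [inner_sub_left, real_inner_smul_left]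
        have h5 := hvs _ h1 h2 _ h2
        rw [if_pos rfl] at h5
        rw [h5, real_inner_self_eq_norm_mul_norm, hsn _ h2]
        ring
      have e4n : ‖v (i : ℕ) - (1 - c (i : ℕ) ^ 2) • s (i : ℕ)‖ ≤ ‖v (i : ℕ)‖ := by
        set w := v (i : ℕ) - (1 - c (i : ℕ) ^ 2) • s (i : ℕ) with hw
        have h5 : ⟪w, w⟫ = ⟪w, v (i : ℕ)⟫ := by
          nth_rw 2 [hw]
          rw [inner_sub_right, real_inner_smul_right, e4a, mul_zero, sub_zero]
        have h6 : ‖w‖ * ‖w‖ ≤ ‖w‖ * ‖v (i : ℕ)‖ := by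
          rw [← real_inner_self_eq_norm_mul_norm, h5]
          exact real_inner_le_norm _ _
        nlinarith [norm_nonneg w, norm_nonneg (v (i : ℕ))]
      have e4 : |⟪v (i : ℕ) - (1 - c (i : ℕ) ^ 2) • s (i : ℕ), -a + x⟫| ≤ δ * ‖v (i : ℕ)‖ := by
        rw [hinner_mem σᗮ _ _ (hvσ _ h1 h2)]
        calc |⟪v (i : ℕ) - (1 - c (i : ℕ) ^ 2) • s (i : ℕ), projE σᗮ (-a + x)⟫|
            ≤ ‖v (i : ℕ) - (1 - c (i : ℕ) ^ 2) • s (i : ℕ)‖ * ‖projE σᗮ (-a + x)‖ :=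
              abs_real_inner_le_norm _ _
          _ ≤ ‖v (i : ℕ)‖ * δ :=
              mul_le_mul e4n (le_of_lt hp2) (norm_nonneg _) (norm_nonneg _)
          _ = δ * ‖v (i : ℕ)‖ := mul_comm _ _
      have e3 : ⟪v (i : ℕ), -a + x⟫ = (1 - c (i : ℕ) ^ 2) * ⟪s (i : ℕ), -a + x⟫
          + ⟪v (i : ℕ) - (1 - c (i : ℕ) ^ 2) • s (i : ℕ), -a + x⟫ := by
        simp only [hvdef, inner_sub_left, real_inner_smul_left]
        ring
      rw [hrepr, hBs i h2, Set.mem_Icc]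
      obtain ⟨e1a, e1b⟩ := abs_le.1 e1
      obtain ⟨e4aa, e4bb⟩ := abs_le.1 e4
      constructor
      · rw [div_le_iff₀ hD]
        linarith [e2, e3]
      · rw [le_div_iff₀ hD]
        linarith [e2, e3]
    · rw [if_neg hiJ]
      by_cases hid : (i : ℕ) < d
      · rw [if_pos hid, hrepr, hBs i hid, Set.mem_Icc]
        have h6 : |⟪s (i : ℕ), -a + x⟫| ≤ 1 := by
          rw [hinner_mem σ _ _ (hsσ _ hid)]
          calc |⟪s (i : ℕ), projE σ (-a + x)⟫| ≤ ‖s (i : ℕ)‖ * ‖projE σ (-a + x)‖ :=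
                abs_real_inner_le_norm _ _
            _ ≤ 1 := by rw [hsn _ hid, one_mul]; exact hp1
        exact abs_le.1 h6
      · rw [if_neg hid, hrepr, Set.mem_Icc]
        have h6 : |⟪B i, -a + x⟫| ≤ δ := by
          rw [hinner_mem σᗮ _ _ (hBσ i hid)]
          calc |⟪B i, projE σᗮ (-a + x)⟫| ≤ ‖B i‖ * ‖projE σᗮ (-a + x)‖ :=
                abs_real_inner_le_norm _ _
            _ ≤ δ := by rw [B.orthonormal.1 i, one_mul]; exact le_of_lt hp2
        exact abs_le.1 h6
  -- lengths of the intervals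
  set len : ℕ → ℝ := fun k =>
    if k ∈ Jset then 4*δ*‖v k‖/(1 - c k ^ 2) else if k < d then 2 else 2*δ with hlen
  have hmeasIb : ∀ k : ℕ, MeasurableSet (Ib k) := by
    intro k
    simp only [hIb]
    split_ifs <;> exact measurableSet_Icc
  have hvolIb : ∀ k : ℕ, volume (Ib k) = ENNReal.ofReal (len k) := by
    intro k
    simp only [hIb, hlen]
    split_ifs with h h2
    · rw [Real.volume_Icc]
      congr 1
      rw [div_sub_div_same]
      congr 1
      ring
    · rw [Real.volume_Icc]; norm_num
    · rw [Real.volume_Icc]; congr 1; ring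
  have hboxpi : ((MeasurableEquiv.toLp 2 (Fin n → ℝ)).symm) ⁻¹'
      (Set.univ.pi (fun i : Fin n => Ib (i : ℕ))) = box := by
    ext z
    simp only [Set.mem_preimage, Set.mem_univ_pi, hbox, Set.mem_setOf_eq]
    rfl
  have hboxmeas : MeasurableSet box := by
    rw [← hboxpi]
    exact ((MeasurableEquiv.toLp 2 (Fin n → ℝ)).symm).measurable
      (MeasurableSet.univ_pi (fun i => hmeasIb _))
  have hvol1 : volume box = ∏ i : Fin n, volume (Ib (i : ℕ)) := by
    rw [← hboxpi,
      (EuclideanSpace.volume_preserving_symm_measurableEquiv_toLp (Fin n)).measure_preimage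
        (MeasurableSet.univ_pi (fun i => hmeasIb _)).nullMeasurableSet]
    exact MeasureTheory.volume_pi_pi _
  have hvol2 : volume (⇑B.repr ⁻¹' box) = volume box :=
    B.measurePreserving_repr.measure_preimage hboxmeas.nullMeasurableSet
  have hvol3 : volume ((fun x => -a + x) ⁻¹' (⇑B.repr ⁻¹' box)) = volume (⇑B.repr ⁻¹' box) :=
    measure_preimage_add volume (-a) _
  have hlennn : ∀ k : ℕ, 0 ≤ len k := by
    intro k
    simp only [hlen]
    split_ifs with h h2
    · exact div_nonneg (by positivity) (le_of_lt (hcsq _ h))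
    · norm_num
    · positivity
  have hlenbound : ∀ j ∈ Finset.Ico m d, len j ≤ 2*Real.pi*δ * (max δ (θ j))⁻¹ := by
    intro j hj
    rw [Finset.mem_Ico] at hj
    obtain ⟨h1, h2⟩ := hj
    simp only [hlen]
    by_cases hJ : j ∈ Jset
    · rw [if_pos hJ]
      have hD := hcsq _ hJ
      have hv0 := hvpos _ hJ
      have hveq : ‖v j‖ ^ 2 = 1 - c j ^ 2 := hvnsq j h1 h2
      have hθδ : δ < θ j := (hJsub _ hJ).2.2
      have hθ0 : 0 < θ j := lt_trans hδ hθδ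
      rw [max_eq_right (le_of_lt hθδ)]
      have hθnn : 0 ≤ θ j := le_of_lt hθ0
      have hθhalf : θ j ≤ Real.pi / 2 := by
        rw [hθeq j h1 h2]
        exact Real.arccos_le_pi_div_two.2 (hc0 j h1 h2)
      have hsin : Real.sin (θ j) = ‖v j‖ := by
        rw [hθeq j h1 h2, Real.sin_arccos, ← hveq, Real.sqrt_sq (norm_nonneg _)]
      have hkey : 2 / Real.pi * θ j ≤ ‖v j‖ := by
        rw [← hsin]
        exact Real.mul_le_sin hθnn hθhalf
      have hsimp : 4*δ*‖v j‖/(1 - c j ^ 2) = 4*δ/‖v j‖ := by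
        rw [← hveq, pow_two]
        field_simp
      rw [hsimp, show 2*Real.pi*δ*(θ j)⁻¹ = 2*Real.pi*δ/(θ j) from by rw [div_eq_mul_inv],
        div_le_div_iff₀ hv0 hθ0]
      have hπ0 : Real.pi ≠ 0 := ne_of_gt Real.pi_pos
      have h7 : 2*Real.pi*δ*(2/Real.pi*θ j) = 4*δ*θ j := by field_simp; ring
      have h8 := mul_le_mul_of_nonneg_left hkey
        (le_of_lt (show (0:ℝ) < 2*Real.pi*δ by positivity))
      rw [h7] at h8
      linarith
    · rw [if_neg hJ, if_pos h2]
      have hθδ : θ j ≤ δ := by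
        by_contra h
        exact hJ (by
          rw [hJdef, Finset.mem_filter, Finset.mem_Ico]
          exact ⟨⟨h1, h2⟩, lt_of_not_ge h⟩)
      rw [max_eq_left hθδ]
      have hδne : δ ≠ 0 := ne_of_gt hδ
      have h5 : 2*Real.pi*δ*δ⁻¹ = 2*Real.pi := by field_simp
      rw [h5]
      linarith
  have hsplit : ∏ i : Fin n, len (i : ℕ) =
      (∏ j ∈ Finset.Ico 0 m, len j) * (∏ j ∈ Finset.Ico m d, len j) * (∏ j ∈ Finset.Ico d n, len j) := by
    rw [Fin.prod_univ_eq_prod_range, Finset.range_eq_Ico,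
      ← Finset.prod_Ico_consecutive len (Nat.zero_le d) (le_of_lt hdn),
      ← Finset.prod_Ico_consecutive len (Nat.zero_le m) (le_of_lt hmd)]
  have h2m : ∏ j ∈ Finset.Ico 0 m, len j = 2 ^ m := by
    have h5 : ∀ j ∈ Finset.Ico 0 m, len j = 2 := by
      intro j hj
      rw [Finset.mem_Ico] at hj
      have hnJ : j ∉ Jset := fun h => absurd (hJsub _ h).1 (not_le.2 hj.2)
      simp only [hlen]
      rw [if_neg hnJ, if_pos (lt_trans hj.2 hmd)]
    rw [Finset.prod_congr rfl h5, Finset.prod_const, Nat.card_Ico, Nat.sub_zero]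
  have h2dn : ∏ j ∈ Finset.Ico d n, len j = (2*δ) ^ (n - d) := by
    have h5 : ∀ j ∈ Finset.Ico d n, len j = 2*δ := by
      intro j hj
      rw [Finset.mem_Ico] at hj
      have hnJ : j ∉ Jset := fun h => absurd (hJsub _ h).2.1 (not_lt.2 hj.1)
      simp only [hlen]
      rw [if_neg hnJ, if_neg (not_lt.2 hj.1)]
    rw [Finset.prod_congr rfl h5, Finset.prod_const, Nat.card_Ico]
  have hmid : ∏ j ∈ Finset.Ico m d, len j ≤
      (2*Real.pi*δ)^(d-m) * ∏ j ∈ Finset.Ico m d, (max δ (θ j))⁻¹ := by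
    calc ∏ j ∈ Finset.Ico m d, len j
        ≤ ∏ j ∈ Finset.Ico m d, (2*Real.pi*δ * (max δ (θ j))⁻¹) :=
          Finset.prod_le_prod (fun j _ => hlennn j) hlenbound
      _ = (2*Real.pi*δ)^(d-m) * ∏ j ∈ Finset.Ico m d, (max δ (θ j))⁻¹ := by
          rw [Finset.prod_mul_distrib, Finset.prod_const, Nat.card_Ico]
  have hPnn : 0 ≤ ∏ j ∈ Finset.Ico m d, (max δ (θ j))⁻¹ :=
    Finset.prod_nonneg (fun j _ => inv_nonneg.2 (le_trans (le_of_lt hδ) (le_max_left _ _)))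
  have hfinal : ∏ i : Fin n, len (i : ℕ) ≤
      (2*Real.pi)^n * δ^(n-m) * ∏ j ∈ Finset.Ico m d, (max δ (θ j))⁻¹ := by
    rw [hsplit, h2m, h2dn]
    have h2le : (2:ℝ) ≤ 2*Real.pi := by nlinarith
    calc (2:ℝ)^m * (∏ j ∈ Finset.Ico m d, len j) * (2*δ)^(n-d)
        ≤ 2^m * ((2*Real.pi*δ)^(d-m) * ∏ j ∈ Finset.Ico m d, (max δ (θ j))⁻¹) * (2*δ)^(n-d) := by
          apply mul_le_mul_of_nonneg_right _ (by positivity)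
          exact mul_le_mul_of_nonneg_left hmid (by positivity)
      _ = (2^m * (2*Real.pi)^(d-m) * 2^(n-d)) * (δ^(d-m) * δ^(n-d))
            * ∏ j ∈ Finset.Ico m d, (max δ (θ j))⁻¹ := by
          rw [mul_pow, mul_pow]
          ring
      _ = (2^m * (2*Real.pi)^(d-m) * 2^(n-d)) * δ^(n-m)
            * ∏ j ∈ Finset.Ico m d, (max δ (θ j))⁻¹ := by
          rw [← pow_add]
          have h6 : d - m + (n - d) = n - m := by omega
          rw [h6]
      _ ≤ (2*Real.pi)^n * δ^(n-m) * ∏ j ∈ Finset.Ico m d, (max δ (θ j))⁻¹ := by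
          apply mul_le_mul_of_nonneg_right _ hPnn
          apply mul_le_mul_of_nonneg_right _ (by positivity)
          calc (2:ℝ)^m * (2*Real.pi)^(d-m) * 2^(n-d)
              ≤ (2*Real.pi)^m * (2*Real.pi)^(d-m) * (2*Real.pi)^(n-d) := by
                apply mul_le_mul
                  (mul_le_mul (pow_le_pow_left₀ (by norm_num) h2le m) le_rfl
                    (by positivity) (by positivity))
                  (pow_le_pow_left₀ (by norm_num) h2le _) (by positivity) (by positivity)
            _ = (2*Real.pi)^n := by
                rw [← pow_add, ← pow_add]
                have h6 : m + (d - m) + (n - d) = n := by omega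
                rw [h6]
  calc volume (((a + ·) '' plate σ δ) ∩ ((b + ·) '' plate τ δ))
      ≤ volume ((fun x => -a + x) ⁻¹' (⇑B.repr ⁻¹' box)) := measure_mono hincl
    _ = volume box := by rw [hvol3, hvol2]
    _ = ∏ i : Fin n, volume (Ib (i : ℕ)) := hvol1
    _ = ENNReal.ofReal (∏ i : Fin n, len (i : ℕ)) := by
        rw [Finset.prod_congr rfl (fun (i : Fin n) _ => hvolIb (i : ℕ))]
        exact (ENNReal.ofReal_prod_of_nonneg (fun i _ => hlennn _)).symm
    _ ≤ ENNReal.ofReal ((2*Real.pi)^n * δ^(n-m) * ∏ j ∈ Finset.Ico m d, (max δ (θ j))⁻¹) :=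
        ENNReal.ofReal_le_ofReal hfinal

end Main
end
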